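/- arXiv:1402.6420 — 6 statements merged into one kernel-verified Lean document; each statement's English description precedes it below -/
import Mathlib

section
/- In the algebra A with relation a·b − b·a = b², for any complex numbers μ and λ, and any homogeneous R of degree k−1 satisfying b·R·(a − λ·b) = (a − (λ+k−1)·b)·R·b, the element Q = (a − μ·b)·R satisfies b·Q·(a − λ·b) = (a − (λ+k)·b)·Q·b. -/
/-- The ℂ-span of the products of words of length `k` in the letters `a` (true)
and `b` (false): the homogeneous elements of degree `k`. -/
def wordSpan {A : Type*} [Ring A] [Algebra ℂ A] (a b : A) (k : ℕ) : Submodule ℂ A :=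
  Submodule.span ℂ
    {x | ∃ l : List Bool, l.length = k ∧ (l.map fun i => if i then a else b).prod = x}

/-! Moving `b` from left to right across a linear factor `a - μ • b` raises `μ` by one, and two
linear factors can be swapped at the price of such a shift. So `b * Q` with `Q = (a - μ • b) * R`
is rewritten as `(a - (μ + 1) • b) * b * R`, the hypothesis on `R` is applied, and the factor
`a - (μ + 1) • b` is swapped past `a - (λ + k - 1) • b` to come out as `a - (λ + k) • b`. -/

section LinearFactors

variable {S A : Type*} [CommRing S] [Ring A] [Algebra S A] {a b : A}

theorem mul_sub_smul_of_commutator_eq_sq (hrel : a * b - b * a = b * b) (μ : S) :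
    b * (a - μ • b) = (a - (μ + 1) • b) * b := by
  have hba : b * a = a * b - b * b := by rw [← hrel]; abel
  simp only [mul_sub, sub_mul, mul_smul_comm, smul_mul_assoc, hba]
  module

theorem sub_smul_mul_sub_smul_comm_of_commutator_eq_sq (hrel : a * b - b * a = b * b)
    (μ ν : S) : (a - (μ + 1) • b) * (a - ν • b) = (a - (ν + 1) • b) * (a - μ • b) := by
  have hba : b * a = a * b - b * b := by rw [← hrel]; abel
  simp only [mul_sub, sub_mul, mul_smul_comm, smul_mul_assoc, hba]
  module

end LinearFactors

theorem conj_shift_step_linear_general (A : Type*) [Ring A] [Algebra ℂ A] (a b : A)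
    (hrel : a * b - b * a = b * b) (k : ℕ)
    (mu lam : ℂ) (R : A)
    (hRconj : b * R * (a - lam • b) = (a - (lam + (k : ℂ) - 1) • b) * R * b) :
    b * ((a - mu • b) * R) * (a - lam • b)
      = (a - (lam + (k : ℂ)) • b) * ((a - mu • b) * R) * b := by
  have hswap := sub_smul_mul_sub_smul_comm_of_commutator_eq_sq hrel mu (lam + (k : ℂ) - 1)
  rw [sub_add_cancel] at hswap
  calc b * ((a - mu • b) * R) * (a - lam • b)
      = (a - (mu + 1) • b) * (b * R * (a - lam • b)) := by
        rw [← mul_assoc, mul_sub_smul_of_commutator_eq_sq hrel]; simp only [mul_assoc]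
    _ = (a - (mu + 1) • b) * (a - (lam + (k : ℂ) - 1) • b) * (R * b) := by
        rw [hRconj]; simp only [mul_assoc]
    _ = (a - (lam + (k : ℂ)) • b) * ((a - mu • b) * R) * b := by
        rw [hswap]; simp only [mul_assoc]

/-- Inductive step (second case): in the algebra with relation `a·b − b·a = b²`,
if `R` is homogeneous of degree `k−1` and satisfies
`b·R·(a − λ·b) = (a − (λ+k−1)·b)·R·b`, then `Q = (a − μ·b)·R` satisfies
`b·Q·(a − λ·b) = (a − (λ+k)·b)·Q·b`. -/
theorem conj_shift_step_linear (A : Type*) [Ring A] [Algebra ℂ A] (a b : A)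
    (hrel : a * b - b * a = b * b) (k : ℕ) (hk : 1 ≤ k)
    (mu lam : ℂ) (R : A) (hR : R ∈ wordSpan a b (k - 1))
    (hRconj : b * R * (a - lam • b) = (a - (lam + (k : ℂ) - 1) • b) * R * b) :
    b * ((a - mu • b) * R) * (a - lam • b)
      = (a - (lam + (k : ℂ)) • b) * ((a - mu • b) * R) * b :=
  conj_shift_step_linear_general A a b hrel k mu lam R hRconj
end

section
/- In the algebra A with relation a·b − b·a = b², for any complex number λ and any homogeneous R of degree k−1 satisfying b·R·(a − λ·b) = (a − (λ+k−1)·b)·R·b, the element Q = b·R satisfies b·Q·(a − λ·b) = (a − (λ+k)·b)·Q·b. -/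
theorem mul_sub_smul_eq_of_commutator_eq_sq {S A : Type*} [CommRing S] [Ring A] [Algebra S A]
    {a b : A} (hrel : a * b - b * a = b * b) (μ : S) :
    b * (a - μ • b) = (a - (μ + 1) • b) * b := by
  have hba : b * a = a * b - b * b := by rw [← hrel]; abel
  rw [mul_sub, hba, sub_mul, mul_smul_comm, smul_mul_assoc, add_smul, one_smul]
  abel

theorem conj_shift_step_b_general (A : Type*) [Ring A] [Algebra ℂ A] (a b : A)
    (hrel : a * b - b * a = b * b) (k : ℕ)
    (lam : ℂ) (R : A)
    (hRconj : b * R * (a - lam • b) = (a - (lam + (k : ℂ) - 1) • b) * R * b) :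
    b * (b * R) * (a - lam • b) = (a - (lam + (k : ℂ)) • b) * (b * R) * b := by
  calc b * (b * R) * (a - lam • b) = b * (b * R * (a - lam • b)) := by simp only [mul_assoc]
    _ = b * (a - (lam + k - 1) • b) * R * b := by rw [hRconj]; simp only [mul_assoc]
    _ = (a - (lam + k) • b) * b * R * b := by
      rw [mul_sub_smul_eq_of_commutator_eq_sq hrel, sub_add_cancel]
    _ = (a - (lam + k) • b) * (b * R) * b := by simp only [mul_assoc]

/-- Inductive step (first case): in the algebra with relation `a·b − b·a = b²`,
if `R` is homogeneous of degree `k−1` and satisfies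
`b·R·(a − λ·b) = (a − (λ+k−1)·b)·R·b`, then `Q = b·R` satisfies
`b·Q·(a − λ·b) = (a − (λ+k)·b)·Q·b`. -/
theorem conj_shift_step_b (A : Type*) [Ring A] [Algebra ℂ A] (a b : A)
    (hrel : a * b - b * a = b * b) (k : ℕ) (hk : 1 ≤ k)
    (lam : ℂ) (R : A) (hR : R ∈ wordSpan a b (k - 1))
    (hRconj : b * R * (a - lam • b) = (a - (lam + (k : ℂ) - 1) • b) * R * b) :
    b * (b * R) * (a - lam • b) = (a - (lam + (k : ℂ)) • b) * (b * R) * b :=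
  conj_shift_step_b_general A a b hrel k lam R hRconj
end

section
/- With notations as above, if det(M′) ≠ 0 and Σ_{j=1}^{n+1} p_j ≠ r, then the (n+2,1) entry of M̃⁻¹ equals σ = r/(r − Σ_{j=1}^{n+1} p_j). -/
/-!
The vector `c = (-p, r)` encodes the relation `r • α_{n+2} = Σ pⱼ • αⱼ`, so `M̃ *ᵥ c = (r - Σ pⱼ) • e₀`
and hence `(r - Σ pⱼ) • M̃⁻¹ *ᵥ e₀ = c`; the last entry gives `σ`. `M̃` is invertible because a kernel
vector `v` yields `r • v - v_{n+2} • c`, whose last entry vanishes and whose image is `-v_{n+2} (r - Σ pⱼ) e₀`;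
by injectivity of `M′` it is zero, forcing `v_{n+2} = 0` and then `v = 0`.
-/

open Matrix

theorem Matrix.of_swap_mulVec {K ι κ : Type*} [CommSemiring K] [Fintype κ] (β : κ → ι → K)
    (w : κ → K) : (Matrix.of fun i j => β j i) *ᵥ w = ∑ j, w j • β j :=
  (mulVec_transpose (of β) w).trans (vecMul_eq_sum w (of β))

section HomogeneousMatrix

variable {K : Type*} [Field K] {n : ℕ}

def homogeneousMatrix (α : Fin (n + 2) → Fin (n + 1) → K) : Matrix (Fin (n + 2)) (Fin (n + 2)) K :=
  Matrix.of fun i j => Fin.cases 1 (fun i' => α j i') i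

variable {α : Fin (n + 2) → Fin (n + 1) → K}

theorem homogeneousMatrix_mulVec_zero (v : Fin (n + 2) → K) :
    (homogeneousMatrix α *ᵥ v) 0 = ∑ j, v j := by
  simp [homogeneousMatrix, mulVec, dotProduct]

theorem homogeneousMatrix_mulVec_succ (v : Fin (n + 2) → K) (i : Fin (n + 1)) :
    (homogeneousMatrix α *ᵥ v) i.succ = (∑ j, v j • α j) i := by
  simp [homogeneousMatrix, mulVec, dotProduct, Finset.sum_apply, mul_comm]

theorem homogeneousMatrix_mulVec_snoc {r : K} {p : Fin (n + 1) → K}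
    (hrel : r • α (Fin.last (n + 1)) = ∑ j, p j • α j.castSucc) :
    homogeneousMatrix α *ᵥ Fin.snoc (-p) r = Pi.single 0 (r - ∑ j, p j) := by
  ext i
  induction i using Fin.cases with
  | zero =>
    rw [homogeneousMatrix_mulVec_zero, Fin.sum_univ_castSucc]
    simp [sub_eq_neg_add]
  | succ i =>
    rw [homogeneousMatrix_mulVec_succ, Fin.sum_univ_castSucc]
    simp [hrel]

theorem eq_zero_of_homogeneousMatrix_mulVec_succ_eq_zero
    (hdet : (Matrix.of fun i j : Fin (n + 1) => α j.castSucc i).det ≠ 0)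
    {x : Fin (n + 2) → K} (hlast : x (Fin.last (n + 1)) = 0)
    (hx : ∀ i : Fin (n + 1), (homogeneousMatrix α *ᵥ x) i.succ = 0) : x = 0 := by
  have hcast : (fun j : Fin (n + 1) => x j.castSucc) = 0 := by
    refine eq_zero_of_mulVec_eq_zero hdet ?_
    ext i
    simpa [Matrix.of_swap_mulVec, homogeneousMatrix_mulVec_succ, Fin.sum_univ_castSucc, hlast]
      using hx i
  ext j
  induction j using Fin.lastCases with
  | last => exact hlast
  | cast j => exact congrFun hcast j

variable {r : K} {p : Fin (n + 1) → K}

theorem homogeneousMatrix_det_ne_zero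
    (hrel : r • α (Fin.last (n + 1)) = ∑ j, p j • α j.castSucc)
    (hdet : (Matrix.of fun i j : Fin (n + 1) => α j.castSucc i).det ≠ 0)
    (hsum : ∑ j, p j ≠ r) : (homogeneousMatrix α).det ≠ 0 := by
  intro h0
  obtain ⟨v, hv, hMv⟩ := exists_mulVec_eq_zero_iff.mpr h0
  have hc := homogeneousMatrix_mulVec_snoc hrel
  set c : Fin (n + 2) → K := Fin.snoc (-p) r
  have hu : r • v - v (Fin.last (n + 1)) • c = 0 :=
    eq_zero_of_homogeneousMatrix_mulVec_succ_eq_zero hdet (by simp [c, mul_comm])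
      fun i => by simp [mulVec_sub, mulVec_smul, hMv, hc, Fin.succ_ne_zero]
  have hlast : v (Fin.last (n + 1)) = 0 := by
    have := congrFun (congrArg (homogeneousMatrix α *ᵥ ·) hu) 0
    simp only [mulVec_sub, mulVec_smul, hMv, hc] at this
    simpa [sub_ne_zero.mpr hsum.symm] using this
  exact hv (eq_zero_of_homogeneousMatrix_mulVec_succ_eq_zero hdet hlast fun i => by simp [hMv])

theorem homogeneousMatrix_inv_apply_last_zero
    (hrel : r • α (Fin.last (n + 1)) = ∑ j, p j • α j.castSucc)
    (hdet : (Matrix.of fun i j : Fin (n + 1) => α j.castSucc i).det ≠ 0)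
    (hsum : ∑ j, p j ≠ r) :
    (homogeneousMatrix α)⁻¹ (Fin.last (n + 1)) 0 = r / (r - ∑ j, p j) := by
  have hunit := (homogeneousMatrix_det_ne_zero hrel hdet hsum).isUnit
  have hinv : (homogeneousMatrix α)⁻¹ *ᵥ Pi.single 0 (r - ∑ j, p j) = Fin.snoc (-p) r := by
    rw [← homogeneousMatrix_mulVec_snoc hrel, mulVec_mulVec, nonsing_inv_mul _ hunit, one_mulVec]
  have := congrFun hinv (Fin.last (n + 1))
  rw [mulVec, dotProduct_single, Fin.snoc_last] at this
  rw [eq_div_iff (sub_ne_zero.mpr hsum.symm), this]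

end HomogeneousMatrix

theorem inv_entry_sigma_general (n : ℕ) (α : Fin (n + 2) → Fin (n + 1) → ℚ)
    (p : Fin (n + 1) → ℤ) (r : ℕ)
    (hrel : (r : ℚ) • α (Fin.last (n + 1)) = ∑ j : Fin (n + 1), (p j : ℚ) • α j.castSucc)
    (hdet : (Matrix.of fun i j : Fin (n + 1) => α j.castSucc i).det ≠ 0)
    (hsum : (∑ j : Fin (n + 1), p j) ≠ (r : ℤ)) :
    (Matrix.of fun i j : Fin (n + 2) => Fin.cases (1 : ℚ) (fun i' => α j i') i)⁻¹
        (Fin.last (n + 1)) 0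
      = (r : ℚ) / ((r : ℚ) - ∑ j : Fin (n + 1), (p j : ℚ)) :=
  homogeneousMatrix_inv_apply_last_zero hrel hdet (by exact_mod_cast hsum)

/-- With `M̃` the `(n+2)×(n+2)` matrix with first row all `1` and `j`-th column
below the first row equal to `α j ∈ ℚ^{n+1}`, if `r·α_{n+2} = Σ_{j=1}^{n+1} p_j·α_j`,
`det M′ ≠ 0` and `Σ p_j ≠ r`, then the `(n+2,1)` entry of `M̃⁻¹` is
`σ = r/(r − Σ p_j)`. -/
theorem inv_entry_sigma (n : ℕ) (α : Fin (n + 2) → Fin (n + 1) → ℚ)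
    (p : Fin (n + 1) → ℤ) (r : ℕ) (hr : 0 < r)
    (hrel : (r : ℚ) • α (Fin.last (n + 1)) = ∑ j : Fin (n + 1), (p j : ℚ) • α j.castSucc)
    (hdet : (Matrix.of fun i j : Fin (n + 1) => α j.castSucc i).det ≠ 0)
    (hsum : (∑ j : Fin (n + 1), p j) ≠ (r : ℤ)) :
    (Matrix.of fun i j : Fin (n + 2) => Fin.cases (1 : ℚ) (fun i' => α j i') i)⁻¹
        (Fin.last (n + 1)) 0
      = (r : ℚ) / ((r : ℚ) - ∑ j : Fin (n + 1), (p j : ℚ)) :=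
  inv_entry_sigma_general n α p r hrel hdet hsum
end

section
/- Let R = ℂ[x₀,…,x_n][λ] and f ∈ R. On the quotient E_f = Ω^{n+1}_{/} / (d_{/}f ∧ d_{/}Ω^{n−1}_{/}) of relative top forms, the operator ∇ defined on classes of exact forms by ∇([d_{/}ξ]) = [d_{/}f ∧ ∂ξ/∂λ − (∂f/∂λ)·d_{/}ξ] is well defined: if ξ = d_{/}η then ∇([d_{/}ξ]) = 0 in E_f. -/
/-!
Since `d_{/}` and `∂/∂λ` are built from partial derivatives, which commute, `∂/∂λ` commutes
with `d_{/}`; for `ξ = d_{/}η` this gives `∂ξ/∂λ = d_{/}(∂η/∂λ)`, while `d_{/}ξ = d_{/}d_{/}η = 0`.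
Hence the representative of `∇([d_{/}ξ])` is `d_{/}f ∧ d_{/}(∂η/∂λ)`, which lies in
`d_{/}f ∧ d_{/}Ω^{n−1}_{/}`.
-/

noncomputable section
open MvPolynomial

/-- `R = ℂ[x₀,…,x_n][λ]`, realized as polynomials in `n+2` variables where the
variables `Fin.castSucc i` are the `xᵢ` and the last variable is `λ`. -/
abbrev PolyR (n : ℕ) : Type := MvPolynomial (Fin (n + 2)) ℂ

/-- `∂/∂λ` (derivative in the last variable). -/
def dLam {n : ℕ} (g : PolyR n) : PolyR n := pderiv (Fin.last (n + 1)) g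

/-- The relative differential `d_{/}` from `n`-forms to top forms: an `n`-form
`ξ = Σᵢ ξᵢ dx₀∧…∧(omit i)…∧dx_n` is encoded by its coefficients `ξ : Fin (n+1) → R`,
and `d_{/}ξ = (Σᵢ (−1)ⁱ ∂ξᵢ/∂xᵢ)·dx₀∧…∧dx_n`. -/
def dRel {n : ℕ} (ξ : Fin (n + 1) → PolyR n) : PolyR n :=
  ∑ i : Fin (n + 1), (-1 : PolyR n) ^ (i : ℕ) * pderiv i.castSucc (ξ i)

/-- Wedge with `d_{/}f` from `n`-forms to top forms:
`d_{/}f ∧ ξ = (Σᵢ (−1)ⁱ (∂f/∂xᵢ)·ξᵢ)·dx₀∧…∧dx_n`. -/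
def wedgeDf {n : ℕ} (f : PolyR n) (ξ : Fin (n + 1) → PolyR n) : PolyR n :=
  ∑ i : Fin (n + 1), (-1 : PolyR n) ^ (i : ℕ) * pderiv i.castSucc f * ξ i

/-- The relative differential `d_{/}` from `(n−1)`-forms to `n`-forms: an
`(n−1)`-form `η = Σ_{i<j} η_{ij} dx₀∧…∧(omit i,j)…∧dx_n` is encoded by
`η : Fin (n+1) → Fin (n+1) → R` (only the entries with `i < j` are used), and
the coefficient of `dx₀∧…∧(omit k)…∧dx_n` in `d_{/}η` is
`Σ_{i<k} (−1)ⁱ ∂η_{ik}/∂xᵢ + Σ_{j>k} (−1)^{j−1} ∂η_{kj}/∂xⱼ`. -/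
def dRelLow {n : ℕ} (η : Fin (n + 1) → Fin (n + 1) → PolyR n) :
    Fin (n + 1) → PolyR n := fun k =>
  (∑ i ∈ Finset.univ.filter (· < k), (-1 : PolyR n) ^ (i : ℕ) * pderiv i.castSucc (η i k))
    + ∑ j ∈ Finset.univ.filter (k < ·), (-1 : PolyR n) ^ ((j : ℕ) - 1) * pderiv j.castSucc (η k j)

/-- The submodule `d_{/}f ∧ d_{/}Ω^{n−1}_{/}` of top forms. -/
def dfWedgeDOmega {n : ℕ} (f : PolyR n) : Submodule ℂ (PolyR n) :=
  Submodule.span ℂ {x | ∃ η : Fin (n + 1) → Fin (n + 1) → PolyR n, x = wedgeDf f (dRelLow η)}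

/-- The quotient `E_f = Ω^{n+1}_{/}/(d_{/}f ∧ d_{/}Ω^{n−1}_{/})`. -/
abbrev Ef {n : ℕ} (f : PolyR n) : Type := PolyR n ⧸ dfWedgeDOmega f

/-- The representative of `∇([d_{/}ξ]) = [d_{/}f ∧ ∂ξ/∂λ − (∂f/∂λ)·d_{/}ξ]`. -/
def nablaRep {n : ℕ} (f : PolyR n) (ξ : Fin (n + 1) → PolyR n) : PolyR n :=
  wedgeDf f (fun i => dLam (ξ i)) - dLam f * dRel ξ

theorem MvPolynomial.pderiv_pderiv_comm {σ R : Type*} [CommSemiring R] (i j : σ)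
    (p : MvPolynomial σ R) : pderiv i (pderiv j p) = pderiv j (pderiv i p) := by
  classical
  induction p using MvPolynomial.induction_on' with
  | add p q hp hq => simp [hp, hq]
  | monomial s a =>
    rcases eq_or_ne i j with rfl | h
    · rfl
    simp only [pderiv_monomial, Finsupp.tsub_apply, Finsupp.single_eq_of_ne h,
      Finsupp.single_eq_of_ne h.symm, tsub_right_comm (a := s), Nat.sub_zero]
    ring_nf

theorem MvPolynomial.pderiv_neg_one_pow_mul {σ R : Type*} [CommRing R] (i : σ) (m : ℕ)
    (g : MvPolynomial σ R) : pderiv i ((-1) ^ m * g) = (-1) ^ m * pderiv i g := by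
  simp

theorem Finset.sum_sum_filter_lt_comm {ι A : Type*} [Fintype ι] [LinearOrder ι] [AddCommMonoid A]
    (G : ι → ι → A) :
    ∑ k, ∑ j ∈ univ.filter (k < ·), G k j = ∑ j, ∑ k ∈ univ.filter (· < j), G k j := by
  simp only [Finset.sum_filter]
  exact Finset.sum_comm

section RelativeForms

variable {n : ℕ}

theorem pderiv_dRelLow (v : Fin (n + 2)) (η : Fin (n + 1) → Fin (n + 1) → PolyR n)
    (k : Fin (n + 1)) : pderiv v (dRelLow η k) = dRelLow (fun i j => pderiv v (η i j)) k := by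
  simp only [dRelLow, map_add, map_sum, pderiv_neg_one_pow_mul, pderiv_pderiv_comm v]

theorem dRel_dRelLow (η : Fin (n + 1) → Fin (n + 1) → PolyR n) : dRel (dRelLow η) = 0 := by
  simp only [dRel, dRelLow, map_add, map_sum, pderiv_neg_one_pow_mul, mul_add, Finset.mul_sum]
  rw [Finset.sum_add_distrib, Finset.sum_sum_filter_lt_comm, ← Finset.sum_add_distrib]
  refine Finset.sum_eq_zero fun j _ => ?_
  rw [← Finset.sum_add_distrib]
  refine Finset.sum_eq_zero fun i hi => ?_
  have hij : (i : ℕ) < j := by simpa using hi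
  -- the two occurrences of `∂ᵢ∂ⱼ ηᵢⱼ` carry the signs `(-1)^(i+j)` and `(-1)^(i+j-1)`
  obtain ⟨m, hm⟩ : ∃ m, (j : ℕ) = m + 1 := ⟨j - 1, by omega⟩
  rw [pderiv_pderiv_comm j.castSucc, hm, Nat.add_sub_cancel, pow_succ]
  ring

theorem nablaRep_dRelLow (f : PolyR n) (η : Fin (n + 1) → Fin (n + 1) → PolyR n) :
    nablaRep f (dRelLow η) = wedgeDf f (dRelLow fun i j => dLam (η i j)) := by
  simp only [nablaRep, dLam, dRel_dRelLow, mul_zero, sub_zero, pderiv_dRelLow]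

end RelativeForms

/-- `∇` is well defined on `E_f`: if `ξ = d_{/}η` then the representative of
`∇([d_{/}ξ])` lies in `d_{/}f ∧ d_{/}Ω^{n−1}_{/}`, i.e. `∇([d_{/}ξ]) = 0` in `E_f`. -/
theorem nabla_well_defined (n : ℕ) (f : PolyR n)
    (η : Fin (n + 1) → Fin (n + 1) → PolyR n) :
    nablaRep f (dRelLow η) ∈ dfWedgeDOmega f := by
  rw [nablaRep_dRelLow]
  exact Submodule.subset_span ⟨_, rfl⟩
end
end

section
/- With E_f, ∇ as above, for every φ ∈ ℂ[λ] and ω ∈ E_f one has the Leibniz-type identity ∇(φ·ω) = (∂φ/∂λ)·b·ω + φ·∇(ω) in E_f; consequently b⁻¹∘∇, defined on b·Ẽ_f where Ẽ_f = E_f/(b-torsion), is a λ-connection commuting with a and b. -/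
noncomputable section
open MvPolynomial

/-!
The identity already holds between representatives. Since `φ(λ)` does not involve the `xᵢ`,
multiplication by `φ` commutes with `d_{/}` and with `d_{/}f ∧ ·`, while `∂/∂λ` obeys the Leibniz
rule; the extra term `φ'·(d_{/}f ∧ ξ)` is the representative of `φ'·b[d_{/}ξ]`.
-/

section ChainRule

variable {σ R : Type*} [CommRing R] (p : Polynomial R)

theorem MvPolynomial.pderiv_aeval_X_of_ne {i j : σ} (h : i ≠ j) :
    pderiv j (Polynomial.aeval (X i : MvPolynomial σ R) p) = 0 := by
  simp [pderiv_X_of_ne h]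

theorem MvPolynomial.pderiv_aeval_X_self (i : σ) :
    pderiv i (Polynomial.aeval (X i : MvPolynomial σ R) p)
      = Polynomial.aeval (X i) (Polynomial.derivative p) := by
  simp

end ChainRule

section Leibniz

variable {n : ℕ} (f : PolyR n)

theorem wedgeDf_add (ξ η : Fin (n + 1) → PolyR n) :
    wedgeDf f (fun i => ξ i + η i) = wedgeDf f ξ + wedgeDf f η := by
  simp only [wedgeDf, mul_add, Finset.sum_add_distrib]

theorem wedgeDf_mul_left (g : PolyR n) (ξ : Fin (n + 1) → PolyR n) :
    wedgeDf f (fun i => g * ξ i) = g * wedgeDf f ξ := by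
  simp only [wedgeDf, Finset.mul_sum]
  exact Finset.sum_congr rfl fun _ _ => by ring

theorem dRel_mul_left {g : PolyR n} (hg : ∀ i : Fin (n + 1), pderiv i.castSucc g = 0)
    (ξ : Fin (n + 1) → PolyR n) :
    dRel (fun i => g * ξ i) = g * dRel ξ := by
  simp only [dRel, pderiv_mul, hg, zero_mul, zero_add, Finset.mul_sum]
  exact Finset.sum_congr rfl fun _ _ => by ring

theorem nablaRep_mul_left {g : PolyR n} (hg : ∀ i : Fin (n + 1), pderiv i.castSucc g = 0)
    (ξ : Fin (n + 1) → PolyR n) :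
    nablaRep f (fun i => g * ξ i) = dLam g * wedgeDf f ξ + g * nablaRep f ξ := by
  have hLeibniz : (fun i => dLam (g * ξ i)) = fun i => dLam g * ξ i + g * dLam (ξ i) := by
    funext i
    simp only [dLam, pderiv_mul]
  rw [nablaRep, nablaRep, hLeibniz, wedgeDf_add, wedgeDf_mul_left, wedgeDf_mul_left,
    dRel_mul_left hg]
  ring

end Leibniz

/-- The Leibniz-type identity `∇(φ·ω) = (∂φ/∂λ)·b·ω + φ·∇(ω)` in `E_f`, for
`φ ∈ ℂ[λ]` and `ω = d_{/}ξ`: since `φ` does not depend on the `xᵢ`, a primitive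
of `φ·d_{/}ξ` is `φ·ξ`, and `b[ω] = [d_{/}f ∧ ξ]`.  Consequently `b⁻¹∘∇`,
defined on `b·Ẽ_f` where `Ẽ_f = E_f/(b-torsion)`, is a `λ`-connection commuting
with `a` and `b`. -/
theorem nabla_leibniz (n : ℕ) (f : PolyR n) (phi : Polynomial ℂ)
    (ξ : Fin (n + 1) → PolyR n) :
    Submodule.Quotient.mk (p := dfWedgeDOmega f)
        (nablaRep f (fun i => Polynomial.aeval (X (Fin.last (n + 1)) : PolyR n) phi * ξ i))
      = Submodule.Quotient.mk (p := dfWedgeDOmega f)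
          (Polynomial.aeval (X (Fin.last (n + 1)) : PolyR n) (Polynomial.derivative phi)
              * wedgeDf f ξ
            + Polynomial.aeval (X (Fin.last (n + 1)) : PolyR n) phi * nablaRep f ξ) := by
  have hφ : ∀ i : Fin (n + 1),
      pderiv i.castSucc (Polynomial.aeval (X (Fin.last (n + 1)) : PolyR n) phi) = 0 :=
    fun i => pderiv_aeval_X_of_ne phi (Fin.castSucc_lt_last i).ne'
  rw [nablaRep_mul_left f hφ, dLam, pderiv_aeval_X_self]
end
end

section
/- The only singular point of the hypersurface {x^{2u} + y^{2v} + z^{2w} + λ·x^u y^v z^w = 0} ⊂ ℂ³ lying on the hypersurface itself is the origin, for every λ ∈ ℂ with λ² ≠ 4 (u, v, w positive integers). -/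
/-! Multiplying each partial derivative by its variable gives the Euler-type relations
`2 x^{2u} + λP = 2 y^{2v} + λP = 2 z^{2w} + λP = 0` with `P = x^u y^v z^w`. Their sum minus
twice `f = 0` is `λP = 0`, so `x^{2u} = y^{2v} = z^{2w} = 0`. -/

lemma two_mul_pow_add_eq_zero_of_partial {R : Type*} [CommRing R] [IsDomain R] [CharZero R]
    {n : ℕ} (hn : 0 < n) {t a : R}
    (h : 2 * n * t ^ (2 * n - 1) + n * t ^ (n - 1) * a = 0) :
    2 * t ^ (2 * n) + t ^ n * a = 0 := by
  have euler : (n : R) * (2 * t ^ (2 * n) + t ^ n * a) = 0 := by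
    rw [← mul_pow_sub_one (by omega : 2 * n ≠ 0), ← mul_pow_sub_one hn.ne']
    linear_combination t * h
  exact (mul_eq_zero.mp euler).resolve_left (Nat.cast_ne_zero.mpr hn.ne')

theorem singular_point_origin_general (u v w : ℕ) (hu : 1 ≤ u) (hv : 1 ≤ v) (hw : 1 ≤ w)
    (lam : ℂ) (x y z : ℂ)
    (h0 : x ^ (2 * u) + y ^ (2 * v) + z ^ (2 * w) + lam * x ^ u * y ^ v * z ^ w = 0)
    (hx : 2 * (u : ℂ) * x ^ (2 * u - 1)
        + lam * (u : ℂ) * x ^ (u - 1) * y ^ v * z ^ w = 0)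
    (hy : 2 * (v : ℂ) * y ^ (2 * v - 1)
        + lam * (v : ℂ) * x ^ u * y ^ (v - 1) * z ^ w = 0)
    (hz : 2 * (w : ℂ) * z ^ (2 * w - 1)
        + lam * (w : ℂ) * x ^ u * y ^ v * z ^ (w - 1) = 0) :
    x = 0 ∧ y = 0 ∧ z = 0 := by
  have ex := two_mul_pow_add_eq_zero_of_partial hu (t := x) (a := lam * y ^ v * z ^ w)
    (by linear_combination hx)
  have ey := two_mul_pow_add_eq_zero_of_partial hv (t := y) (a := lam * x ^ u * z ^ w)
    (by linear_combination hy)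
  have ez := two_mul_pow_add_eq_zero_of_partial hw (t := z) (a := lam * x ^ u * y ^ v)
    (by linear_combination hz)
  have hP : lam * x ^ u * y ^ v * z ^ w = 0 := by linear_combination ex + ey + ez - 2 * h0
  have hx2 : x ^ (2 * u) = 0 := by linear_combination (ex - hP) / 2
  have hy2 : y ^ (2 * v) = 0 := by linear_combination (ey - hP) / 2
  have hz2 : z ^ (2 * w) = 0 := by linear_combination (ez - hP) / 2
  exact ⟨(pow_eq_zero_iff'.mp hx2).1, (pow_eq_zero_iff'.mp hy2).1, (pow_eq_zero_iff'.mp hz2).1⟩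

/-- The only singular point of `{x^{2u} + y^{2v} + z^{2w} + λ·x^u y^v z^w = 0} ⊂ ℂ³`
lying on the hypersurface is the origin, for every `λ` with `λ² ≠ 4`
(`u, v, w ≥ 1`): if `f` and its three partial derivatives vanish at `(x,y,z)`,
then `x = y = z = 0`. -/
theorem singular_point_origin (u v w : ℕ) (hu : 1 ≤ u) (hv : 1 ≤ v) (hw : 1 ≤ w)
    (lam : ℂ) (hlam : lam ^ 2 ≠ 4) (x y z : ℂ)
    (h0 : x ^ (2 * u) + y ^ (2 * v) + z ^ (2 * w) + lam * x ^ u * y ^ v * z ^ w = 0)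
    (hx : 2 * (u : ℂ) * x ^ (2 * u - 1)
        + lam * (u : ℂ) * x ^ (u - 1) * y ^ v * z ^ w = 0)
    (hy : 2 * (v : ℂ) * y ^ (2 * v - 1)
        + lam * (v : ℂ) * x ^ u * y ^ (v - 1) * z ^ w = 0)
    (hz : 2 * (w : ℂ) * z ^ (2 * w - 1)
        + lam * (w : ℂ) * x ^ u * y ^ v * z ^ (w - 1) = 0) :
    x = 0 ∧ y = 0 ∧ z = 0 :=
  singular_point_origin_general u v w hu hv hw lam x y z h0 hx hy hz
end
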